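/- Let A ∈ ℤ^{d_A×J} with columns a_1,…,a_J and B ∈ ℤ^{d_B×K} with columns b_1,…,b_K be homogeneous configurations, i.e., there exist w ∈ ℚ^{d_A} with ⟨w, a_j⟩ = 1 for all j and v ∈ ℚ^{d_B} with ⟨v, b_k⟩ = 1 for all k. Suppose B_A is a Markov basis for A and B_B is a Markov basis for B. Then the set consisting of (i) all basic moves e_{j1 k1} + e_{j2 k2} − e_{j1 k2} − e_{j2 k1} (j1 ≠ j2, k1 ≠ k2) and their negatives, (ii) all distributions z^A(k_1,…,k_{deg z^A}) of elements z^A ∈ B_A over column indices k_1,…,k_{deg z^A} ∈ {1,…,K}, and (iii) all distributions z^B(j_1,…,j_{deg z^B}) of elements z^B ∈ B_B over row indices j_1,…,j_{deg z^B} ∈ {1,…,J}, forms a Markov basis for the Segre product A⊗B: it connects every fiber { x ∈ ℕ^{J×K} : Σ_j x_{j+} a_j = t_A, Σ_k x_{+k} b_k = t_B } through nonnegative tables. -/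

import Mathlib

/-- `M` connects table `x` to table `y` through nonnegative tables with
consecutive differences in `M`. -/
def PathConn {ι : Type} (M : Set (ι → ℤ)) (x y : ι → ℕ) : Prop :=
  ∃ (n : ℕ) (f : Fin (n + 1) → ι → ℕ),
    f 0 = x ∧ f (Fin.last n) = y ∧
    ∀ i : Fin n, (fun c => (f i.succ c : ℤ) - (f i.castSucc c : ℤ)) ∈ M

/-- `M` is a Markov basis for the configuration with columns `cols`:
a symmetric set of moves connecting any two tables with equal sufficient
statistic. -/
def IsMarkovBasisFor {ι : Type} [Fintype ι] {d : ℕ}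
    (cols : ι → Fin d → ℤ) (M : Set (ι → ℤ)) : Prop :=
  (∀ z ∈ M, z ≠ 0 ∧ ∀ r : Fin d, ∑ c : ι, z c * cols c r = 0) ∧
  (∀ z ∈ M, -z ∈ M) ∧
  ∀ x y : ι → ℕ,
    (∀ r : Fin d, ∑ c : ι, (x c : ℤ) * cols c r = ∑ c : ι, (y c : ℤ) * cols c r) →
    PathConn M x y

/-- `w` is a distribution z^A(k_1,…,k_d) of the move `z` on row levels over
column indices: writing z = Σ_{h} (e_{j_h} − e_{j'_h}) with j_1 ≤ … ≤ j_d the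
positive part with multiplicity and j'_1 ≤ … ≤ j'_d the negative part,
w = Σ_h (e_{j_h k_h} − e_{j'_h k_h}) for some k_1,…,k_d. -/
def IsColDistribution {J K : ℕ} (z : Fin J → ℤ) (w : Fin J × Fin K → ℤ) : Prop :=
  ∃ (d : ℕ) (pos neg : Fin d → Fin J) (κ : Fin d → Fin K),
    Monotone pos ∧ Monotone neg ∧
    (∀ j : Fin J, (Finset.univ.filter (fun h => pos h = j)).card = (z j).toNat) ∧
    (∀ j : Fin J, (Finset.univ.filter (fun h => neg h = j)).card = (-z j).toNat) ∧
    w = fun p => ∑ h : Fin d,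
      ((if p = (pos h, κ h) then (1 : ℤ) else 0) -
       (if p = (neg h, κ h) then (1 : ℤ) else 0))

/-- `w` is a distribution z^B(j_1,…,j_d) of the move `z` on column levels
over row indices. -/
def IsRowDistribution {J K : ℕ} (z : Fin K → ℤ) (w : Fin J × Fin K → ℤ) : Prop :=
  ∃ (d : ℕ) (pos neg : Fin d → Fin K) (ρ : Fin d → Fin J),
    Monotone pos ∧ Monotone neg ∧
    (∀ k : Fin K, (Finset.univ.filter (fun h => pos h = k)).card = (z k).toNat) ∧
    (∀ k : Fin K, (Finset.univ.filter (fun h => neg h = k)).card = (-z k).toNat) ∧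
    w = fun p => ∑ h : Fin d,
      ((if p = (ρ h, pos h) then (1 : ℤ) else 0) -
       (if p = (ρ h, neg h) then (1 : ℤ) else 0))

/-- The basic moves e_{j1 k1} + e_{j2 k2} − e_{j1 k2} − e_{j2 k1}
(j1 ≠ j2, k1 ≠ k2) and their negatives. -/
def BasicMoves (J K : ℕ) : Set (Fin J × Fin K → ℤ) :=
  {z | ∃ (j1 j2 : Fin J) (k1 k2 : Fin K), j1 ≠ j2 ∧ k1 ≠ k2 ∧
    (z = Pi.single (j1, k1) (1 : ℤ) + Pi.single (j2, k2) (1 : ℤ)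
          - Pi.single (j1, k2) (1 : ℤ) - Pi.single (j2, k1) (1 : ℤ) ∨
     z = -(Pi.single (j1, k1) (1 : ℤ) + Pi.single (j2, k2) (1 : ℤ)
          - Pi.single (j1, k2) (1 : ℤ) - Pi.single (j2, k1) (1 : ℤ)))}


/-!
Homogeneity forces every move of `B_A` and of `B_B` to have coordinate sum zero. A path of
row-sum vectors along `B_A` therefore lifts to a path of tables that fixes the column sums: each
move is distributed over columns so that the units it removes from row `j` are taken from cells
where the current table has entries, which is possible because row `j` stays nonnegative after
the move. Lifting a path of column sums along `B_B` in the same way yields a table with the margins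
of `y`, and tables with equal margins are joined by basic moves, each chosen to lower `∑ |x - y|`.
-/

open Finset

def MoveStep {ι : Type} (M : Set (ι → ℤ)) (x y : ι → ℕ) : Prop :=
  (fun c => (y c : ℤ) - x c) ∈ M

theorem reflTransGen_moveStep_mono {ι : Type} {M M' : Set (ι → ℤ)} (hM : M ⊆ M')
    {x y : ι → ℕ} (h : Relation.ReflTransGen (MoveStep M) x y) :
    Relation.ReflTransGen (MoveStep M') x y :=
  Relation.ReflTransGen.mono (fun _ _ hxy => hM hxy) _ _ h

theorem moveStep_toNat_add {ι : Type} {M : Set (ι → ℤ)} {z : ι → ℤ} (hz : z ∈ M)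
    {x : ι → ℕ} (hxz : ∀ c, 0 ≤ (x c : ℤ) + z c) :
    MoveStep M x (fun c => ((x c : ℤ) + z c).toNat) := by
  have : (fun c => (((x c : ℤ) + z c).toNat : ℤ) - x c) = z := by
    funext c; rw [Int.toNat_of_nonneg (hxz c)]; ring
  rw [MoveStep, this]; exact hz

theorem pathConn_iff_reflTransGen {ι : Type} {M : Set (ι → ℤ)} {x y : ι → ℕ} :
    PathConn M x y ↔ Relation.ReflTransGen (MoveStep M) x y := by
  constructor
  · rintro ⟨n, f, rfl, rfl, hf⟩
    have : ∀ i : Fin (n + 1), Relation.ReflTransGen (MoveStep M) (f 0) (f i) := by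
      intro i
      induction i using Fin.induction with
      | zero => rfl
      | succ i ih => exact ih.tail (hf i)
    exact this _
  · intro h
    induction h using Relation.ReflTransGen.head_induction_on with
    | refl => exact ⟨0, fun _ => y, rfl, rfl, fun i => i.elim0⟩
    | head hstep _ ih =>
      obtain ⟨n, f, rfl, rfl, hf⟩ := ih
      refine ⟨n + 1, Fin.cons _ f, rfl, by simp [← Fin.succ_last], fun i => ?_⟩
      cases i using Fin.cases with
      | zero => exact hstep
      | succ i => simpa [← Fin.succ_castSucc] using hf i

theorem sum_eq_zero_of_homogeneous {ι R : Type*} [Fintype ι] [CommRing R] [CharZero R] {d : ℕ}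
    (cols : ι → Fin d → ℤ) (w : Fin d → R) (hw : ∀ c, ∑ r, w r * (cols c r : R) = 1)
    {z : ι → ℤ} (hz : ∀ r, ∑ c, z c * cols c r = 0) : ∑ c, z c = 0 := by
  have hzR : ∀ r, ∑ c, (z c : R) * cols c r = 0 := fun r => by exact_mod_cast hz r
  suffices ∑ c, (z c : R) = 0 by exact_mod_cast this
  calc ∑ c, (z c : R) = ∑ c, (z c : R) * ∑ r, w r * (cols c r : R) := by simp [hw]
    _ = ∑ r, w r * ∑ c, (z c : R) * cols c r := by
      simp only [mul_sum]; rw [sum_comm]; congr! 2; ring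
    _ = 0 := by simp [hzR]

theorem finSigmaFinEquiv_lt_of_fst_lt {m : ℕ} {n : Fin m → ℕ} {s t : (i : Fin m) × Fin (n i)}
    (h : s.1 < t.1) : finSigmaFinEquiv s < finSigmaFinEquiv t := by
  set N : ℕ → ℕ := fun l => if hl : l < m then n ⟨l, hl⟩ else 0
  have partial_sum (i : Fin m) : ∑ l : Fin i, n (Fin.castLE i.2.le l) = ∑ l ∈ range i, N l := by
    rw [← Fin.sum_univ_eq_sum_range]
    exact sum_congr rfl fun l _ => by simp [N, Fin.castLE, l.2.trans i.2]
  have hs : (s.2 : ℕ) < N s.1 := by simp [N]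
  rw [Fin.lt_def, finSigmaFinEquiv_apply, finSigmaFinEquiv_apply,
    partial_sum, partial_sum]
  calc ∑ l ∈ range s.1, N l + s.2 < ∑ l ∈ range (s.1 + 1), N l := by
        rw [sum_range_succ]; omega
    _ ≤ ∑ l ∈ range t.1, N l := sum_le_sum_of_subset (range_subset_range.2 h)
    _ ≤ _ := Nat.le_add_right _ _

theorem card_filter_sigma_fst_eq {ι : Type*} [Fintype ι] [DecidableEq ι] (c : ι → ℕ) (i : ι) :
    #{s : (i : ι) × Fin (c i) | s.1 = i} = c i := by
  rw [← Fintype.card_subtype, Fintype.card_congr (Equiv.sigmaSubtype i), Fintype.card_fin]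

theorem exists_monotone_card_fiber_eq {n d : ℕ} (c : Fin n → ℕ) (hd : ∑ j, c j = d) :
    ∃ f : Fin d → Fin n, Monotone f ∧ ∀ j, #{h | f h = j} = c j := by
  subst hd
  refine ⟨fun h => (finSigmaFinEquiv.symm h).1, fun h h' hle => ?_, fun j => ?_⟩
  · by_contra! hlt
    have := finSigmaFinEquiv_lt_of_fst_lt hlt
    simp only [Equiv.apply_symm_apply] at this
    exact this.not_ge hle
  · rw [← card_filter_sigma_fst_eq c j, ← card_map finSigmaFinEquiv.symm.toEmbedding]
    congr 1; ext s; simp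

theorem exists_injective_comp_eq {α β ι : Type*} [Fintype α] [Fintype β] [DecidableEq ι]
    {f : α → ι} {g : β → ι} (h : ∀ i, #{a | f a = i} ≤ #{b | g b = i}) :
    ∃ Φ : α → β, Function.Injective Φ ∧ ∀ a, g (Φ a) = f a := by
  have e : ∀ i, {a // f a = i} ↪ {b // g b = i} := fun i =>
    (Function.Embedding.nonempty_of_card_le (by simpa [Fintype.card_subtype] using h i)).some
  refine ⟨fun a => (e (f a) ⟨a, rfl⟩).1, ?_, fun a => (e (f a) ⟨a, rfl⟩).2⟩
  have : (fun a => (e (f a) ⟨a, rfl⟩).1) = Equiv.sigmaFiberEquiv g ∘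
      Sigma.map id (fun i => e i) ∘ (Equiv.sigmaFiberEquiv f).symm := by
    funext a; rfl
  rw [this]
  exact (Equiv.injective _).comp
    ((Function.injective_id.sigma_map fun i => (e i).injective).comp (Equiv.injective _))

theorem exists_card_fiber_le {α ι γ : Type*} [Fintype α] [Fintype ι] [DecidableEq ι]
    [Fintype γ] [DecidableEq γ] (f : α → ι) (c : ι × γ → ℕ)
    (h : ∀ i, #{a | f a = i} ≤ ∑ g, c (i, g)) :
    ∃ κ : α → γ, ∀ p, #{a | (f a, κ a) = p} ≤ c p := by
  obtain ⟨Φ, hΦ, hΦf⟩ := exists_injective_comp_eq (g := fun s : (p : ι × γ) × Fin (c p) => s.1.1)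
    (f := f) fun i => by
      rw [card_eq_sum_card_fiberwise (f := fun s => s.1.2) (t := univ)
        (s := {s : (p : ι × γ) × Fin (c p) | s.1.1 = i}) (by simp)]
      refine (h i).trans_eq (sum_congr rfl fun g _ => ?_)
      rw [← card_filter_sigma_fst_eq c (i, g)]
      congr 1; ext s; simp [Prod.ext_iff]
  refine ⟨fun a => (Φ a).1.2, fun p => ?_⟩
  rw [← card_filter_sigma_fst_eq c p]
  refine card_le_card_of_injOn Φ (fun a ha => ?_) hΦ.injOn
  simp only [coe_filter, mem_univ, true_and, Set.mem_ofPred_eq] at ha ⊢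
  rw [← ha, ← hΦf]

section Distribution

variable {J K : ℕ}

theorem IsColDistribution.sum_row_eq {z : Fin J → ℤ} {w : Fin J × Fin K → ℤ}
    (hw : IsColDistribution z w) (j : Fin J) : ∑ k, w (j, k) = z j := by
  obtain ⟨d, pos, neg, κ, -, -, hpos, hneg, rfl⟩ := hw
  rw [sum_comm]
  simp only [sum_sub_distrib, Prod.mk.injEq, ite_and]
  rw [← Int.toNat_sub_toNat_neg (z j), ← hpos j, ← hneg j]
  simp [sum_boole, eq_comm]

theorem IsColDistribution.sum_col_eq_zero {z : Fin J → ℤ} {w : Fin J × Fin K → ℤ}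
    (hw : IsColDistribution z w) (k : Fin K) : ∑ j, w (j, k) = 0 := by
  obtain ⟨d, pos, neg, κ, -, -, -, -, rfl⟩ := hw
  rw [sum_comm]
  simp [Prod.mk.injEq, ite_and]

theorem IsColDistribution.transpose {z : Fin K → ℤ} {w : Fin K × Fin J → ℤ}
    (hw : IsColDistribution z w) : IsRowDistribution z (fun p : Fin J × Fin K => w p.swap) := by
  obtain ⟨d, pos, neg, κ, hmp, hmn, hcp, hcn, rfl⟩ := hw
  refine ⟨d, pos, neg, κ, hmp, hmn, hcp, hcn, ?_⟩
  funext p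
  simp only [Prod.swap, Prod.ext_iff, and_comm]

theorem exists_isColDistribution_add_nonneg {z : Fin J → ℤ} (hz : ∑ j, z j = 0)
    {x : Fin J × Fin K → ℕ} (hx : ∀ j, 0 ≤ ∑ k, (x (j, k) : ℤ) + z j) :
    ∃ w, IsColDistribution z w ∧ ∀ p, 0 ≤ (x p : ℤ) + w p := by
  have hdeg : ∑ j, (-z j).toNat = ∑ j, (z j).toNat := by
    have : ∑ j, ((z j).toNat - (-z j).toNat : ℤ) = 0 := by
      simpa only [Int.toNat_sub_toNat_neg] using hz
    rw [sum_sub_distrib, sub_eq_zero] at this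
    exact_mod_cast this.symm
  obtain ⟨pos, hpos_mono, hpos⟩ := exists_monotone_card_fiber_eq (fun j => (z j).toNat) rfl
  obtain ⟨neg, hneg_mono, hneg⟩ := exists_monotone_card_fiber_eq (fun j => (-z j).toNat) hdeg
  obtain ⟨κ, hκ⟩ := exists_card_fiber_le neg x fun j => by
    rw [hneg j, Int.toNat_le]
    push_cast
    linarith [hx j]
  refine ⟨_, ⟨_, pos, neg, κ, hpos_mono, hneg_mono, hpos, hneg, rfl⟩, fun p => ?_⟩
  have hnegp : ∑ h, (if p = (neg h, κ h) then (1 : ℤ) else 0) ≤ x p := by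
    rw [sum_boole]; exact_mod_cast (by simpa only [eq_comm] using hκ p)
  have hposp : 0 ≤ ∑ h, (if p = (pos h, κ h) then (1 : ℤ) else 0) :=
    sum_nonneg fun h _ => by split_ifs <;> norm_num
  rw [sum_sub_distrib]
  linarith

end Distribution

section Lift

variable {J K : ℕ}

theorem exists_lift_of_reflTransGen_rowSums {M : Set (Fin J → ℤ)} (hM : ∀ z ∈ M, ∑ j, z j = 0)
    {x : Fin J × Fin K → ℕ} {u : Fin J → ℕ}
    (h : Relation.ReflTransGen (MoveStep M) (fun j => ∑ k, x (j, k)) u) :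
    ∃ x' : Fin J × Fin K → ℕ, (∀ j, ∑ k, x' (j, k) = u j) ∧
      (∀ k, ∑ j, x' (j, k) = ∑ j, x (j, k)) ∧
      Relation.ReflTransGen (MoveStep {w | ∃ z ∈ M, IsColDistribution z w}) x x' := by
  induction h with
  | refl => exact ⟨x, fun _ => rfl, fun _ => rfl, .refl⟩
  | @tail b c _ hbc ih =>
    obtain ⟨x₁, hrow, hcol, hpath⟩ := ih
    set z : Fin J → ℤ := fun j => (c j : ℤ) - b j
    have hrow_add (j : Fin J) : ∑ k, (x₁ (j, k) : ℤ) + z j = c j := by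
      simp only [z, ← hrow j]; push_cast; ring
    obtain ⟨w, hw, hnonneg⟩ := exists_isColDistribution_add_nonneg (hM z hbc)
      fun j => (hrow_add j).symm ▸ Int.natCast_nonneg _
    set x₂ : Fin J × Fin K → ℕ := fun p => ((x₁ p : ℤ) + w p).toNat
    have hx₂ (p) : (x₂ p : ℤ) = x₁ p + w p := Int.toNat_of_nonneg (hnonneg p)
    have hstep : MoveStep {w | ∃ z ∈ M, IsColDistribution z w} x₁ x₂ :=
      moveStep_toNat_add (Set.mem_ofPred.2 ⟨z, hbc, hw⟩) hnonneg
    refine ⟨x₂, fun j => ?_, fun k => ?_, hpath.tail hstep⟩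
    · have : (∑ k, x₂ (j, k) : ℤ) = c j := by
        simp only [hx₂, sum_add_distrib, hw.sum_row_eq, hrow_add]
      exact_mod_cast this
    · have : (∑ j, x₂ (j, k) : ℤ) = ∑ j, x (j, k) := by
        simp only [Nat.cast_sum, hx₂, sum_add_distrib, hw.sum_col_eq_zero, add_zero]
        exact_mod_cast hcol k
      exact_mod_cast this

theorem exists_lift_of_reflTransGen_colSums {M : Set (Fin K → ℤ)} (hM : ∀ z ∈ M, ∑ k, z k = 0)
    {x : Fin J × Fin K → ℕ} {u : Fin K → ℕ}
    (h : Relation.ReflTransGen (MoveStep M) (fun k => ∑ j, x (j, k)) u) :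
    ∃ x' : Fin J × Fin K → ℕ, (∀ k, ∑ j, x' (j, k) = u k) ∧
      (∀ j, ∑ k, x' (j, k) = ∑ k, x (j, k)) ∧
      Relation.ReflTransGen (MoveStep {w | ∃ z ∈ M, IsRowDistribution z w}) x x' := by
  obtain ⟨x', hrow, hcol, hpath⟩ :=
    exists_lift_of_reflTransGen_rowSums (x := fun q : Fin K × Fin J => x q.swap) hM h
  refine ⟨fun p => x' p.swap, hrow, hcol,
    hpath.lift (fun (t : Fin K × Fin J → ℕ) (p : Fin J × Fin K) => t p.swap) ?_⟩
  rintro t t' ⟨z, hz, hw⟩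
  exact ⟨z, hz, hw.transpose⟩

end Lift

section BasicMoves

variable {J K : ℕ}

theorem sum_row_eq_zero_of_mem_basicMoves {z : Fin J × Fin K → ℤ} (hz : z ∈ BasicMoves J K)
    (j : Fin J) : ∑ k, z (j, k) = 0 := by
  obtain ⟨j₁, j₂, k₁, k₂, -, -, rfl | rfl⟩ := hz <;>
    simp [Pi.single_apply, Prod.ext_iff, ite_and, sum_add_distrib, sum_sub_distrib]

theorem sum_col_eq_zero_of_mem_basicMoves {z : Fin J × Fin K → ℤ} (hz : z ∈ BasicMoves J K)
    (k : Fin K) : ∑ j, z (j, k) = 0 := by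
  obtain ⟨j₁, j₂, k₁, k₂, -, -, rfl | rfl⟩ := hz <;>
    simp [Pi.single_apply, Prod.ext_iff, ite_and, sum_add_distrib, sum_sub_distrib]

theorem exists_lt_of_sum_eq_of_lt {ι : Type*} [Fintype ι] {f g : ι → ℕ}
    (h : ∑ i, f i = ∑ i, g i) {i : ι} (hi : g i < f i) : ∃ i', f i' < g i' := by
  by_contra! H
  exact (sum_lt_sum (fun i _ => H i) ⟨i, mem_univ i, hi⟩).ne h.symm

theorem reflTransGen_basicMoves_of_sums_eq {x y : Fin J × Fin K → ℕ}
    (hrow : ∀ j, ∑ k, x (j, k) = ∑ k, y (j, k)) (hcol : ∀ k, ∑ j, x (j, k) = ∑ j, y (j, k)) :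
    Relation.ReflTransGen (MoveStep (BasicMoves J K)) x y := by
  induction hN : ∑ p, ((x p : ℤ) - y p).natAbs using Nat.strong_induction_on generalizing x with
  | _ N ih =>
  by_cases hxy : x = y
  · exact hxy ▸ .refl
  obtain ⟨⟨j₁, k₁⟩, h₁⟩ : ∃ p, y p < x p := by
    obtain ⟨p, hp⟩ := Function.ne_iff.1 hxy
    rcases hp.lt_or_gt with hp | hp
    · exact exists_lt_of_sum_eq_of_lt (by simp only [Fintype.sum_prod_type, hrow]) hp
    · exact ⟨p, hp⟩
  obtain ⟨k₂, h₂⟩ := exists_lt_of_sum_eq_of_lt (hrow j₁) h₁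
  obtain ⟨j₂, h₃⟩ := exists_lt_of_sum_eq_of_lt (hcol k₂).symm h₂
  have hk : k₁ ≠ k₂ := by rintro rfl; omega
  have hj : j₁ ≠ j₂ := by rintro rfl; omega
  set z : Fin J × Fin K → ℤ := -(Pi.single (j₁, k₁) 1 + Pi.single (j₂, k₂) 1
    - Pi.single (j₁, k₂) 1 - Pi.single (j₂, k₁) 1)
  have hz : z ∈ BasicMoves J K := ⟨j₁, j₂, k₁, k₂, hj, hk, Or.inr rfl⟩
  have hnonneg (p) : 0 ≤ (x p : ℤ) + z p := by
    simp only [z, Pi.neg_apply, Pi.sub_apply, Pi.add_apply, Pi.single_apply]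
    split_ifs <;> simp_all <;> omega
  set x' : Fin J × Fin K → ℕ := fun p => ((x p : ℤ) + z p).toNat
  have hx' (p) : (x' p : ℤ) = x p + z p := Int.toNat_of_nonneg (hnonneg p)
  have hrow' (j) : ∑ k, x' (j, k) = ∑ k, y (j, k) := by
    rw [← hrow j, ← Nat.cast_inj (R := ℤ)]
    simp only [Nat.cast_sum, hx', sum_add_distrib, sum_row_eq_zero_of_mem_basicMoves hz, add_zero]
  have hcol' (k) : ∑ j, x' (j, k) = ∑ j, y (j, k) := by
    rw [← hcol k, ← Nat.cast_inj (R := ℤ)]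
    simp only [Nat.cast_sum, hx', sum_add_distrib, sum_col_eq_zero_of_mem_basicMoves hz, add_zero]
  -- `|x - y|` drops by one at `(j₁, k₁)`, `(j₂, k₂)`, `(j₁, k₂)`
  -- and grows by at most one at `(j₂, k₁)`
  have hcell (p) : ((x' p : ℤ) - y p).natAbs + ((if p = (j₁, k₁) then 1 else 0) +
      (if p = (j₂, k₂) then 1 else 0) + (if p = (j₁, k₂) then 1 else 0)) ≤
      ((x p : ℤ) - y p).natAbs + (if p = (j₂, k₁) then 1 else 0) := by
    rw [hx']
    simp only [z, Pi.neg_apply, Pi.sub_apply, Pi.add_apply, Pi.single_apply]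
    split_ifs <;> simp_all <;> omega
  have hlt : ∑ p, ((x' p : ℤ) - y p).natAbs < N := by
    have := sum_le_sum fun p (_ : p ∈ univ) => hcell p
    simp only [sum_add_distrib, sum_ite_eq', mem_univ, if_true] at this
    omega
  exact .head (moveStep_toNat_add hz hnonneg) (ih _ hlt hrow' hcol' rfl)

end BasicMoves

theorem sum_mul_fst_eq {α β : Type*} [Fintype α] [Fintype β] (x : α × β → ℕ) (a : α → ℤ) :
    ∑ p, (x p : ℤ) * a p.1 = ∑ i, ((∑ j, x (i, j) : ℕ) : ℤ) * a i := by
  simp [Fintype.sum_prod_type, sum_mul]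

theorem sum_mul_snd_eq {α β : Type*} [Fintype α] [Fintype β] (x : α × β → ℕ) (b : β → ℤ) :
    ∑ p, (x p : ℤ) * b p.2 = ∑ j, ((∑ i, x (i, j) : ℕ) : ℤ) * b j := by
  simp [Fintype.sum_prod_type_right, sum_mul]

/-- given homogeneous configurations A and B with Markov bases
B_A and B_B, the basic moves together with all distributions of moves of B_A
over column indices and of moves of B_B over row indices form a Markov basis
for the Segre product A⊗B. -/
theorem markov_basis_segre_product (dA dB J K : ℕ)
    (A : Fin dA → Fin J → ℤ) (B : Fin dB → Fin K → ℤ)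
    (w : Fin dA → ℚ) (hw : ∀ j : Fin J, ∑ r : Fin dA, w r * (A r j : ℚ) = 1)
    (v : Fin dB → ℚ) (hv : ∀ k : Fin K, ∑ r : Fin dB, v r * (B r k : ℚ) = 1)
    (BA : Set (Fin J → ℤ)) (hBA : IsMarkovBasisFor (fun j r => A r j) BA)
    (BB : Set (Fin K → ℤ)) (hBB : IsMarkovBasisFor (fun k r => B r k) BB)
    (S : Set (Fin J × Fin K → ℤ))
    (hS : S = BasicMoves J K
        ∪ {z | ∃ zA ∈ BA, IsColDistribution zA z}
        ∪ {z | ∃ zB ∈ BB, IsRowDistribution zB z}) :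
    ∀ x y : Fin J × Fin K → ℕ,
      (∀ r : Fin dA,
        ∑ p : Fin J × Fin K, (x p : ℤ) * A r p.1 =
        ∑ p : Fin J × Fin K, (y p : ℤ) * A r p.1) →
      (∀ r : Fin dB,
        ∑ p : Fin J × Fin K, (x p : ℤ) * B r p.2 =
        ∑ p : Fin J × Fin K, (y p : ℤ) * B r p.2) →
      PathConn S x y := by
  intro x y hA hB
  have hBA_sum (z) (hz : z ∈ BA) : ∑ j, z j = 0 :=
    sum_eq_zero_of_homogeneous _ w hw (hBA.1 z hz).2
  have hBB_sum (z) (hz : z ∈ BB) : ∑ k, z k = 0 :=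
    sum_eq_zero_of_homogeneous _ v hv (hBB.1 z hz).2
  obtain ⟨x₁, hrow₁, hcol₁, hpath₁⟩ := exists_lift_of_reflTransGen_rowSums hBA_sum <|
    pathConn_iff_reflTransGen.1 <| hBA.2.2 _ (fun j => ∑ k, y (j, k)) fun r => by
      simpa only [sum_mul_fst_eq] using hA r
  obtain ⟨x₂, hcol₂, hrow₂, hpath₂⟩ := exists_lift_of_reflTransGen_colSums (x := x₁) hBB_sum <|
    pathConn_iff_reflTransGen.1 <| hBB.2.2 _ (fun k => ∑ j, y (j, k)) fun r => by
      simpa only [sum_mul_snd_eq, hcol₁] using hB r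
  have hpath₃ := reflTransGen_basicMoves_of_sums_eq (x := x₂) (y := y)
    (fun j => (hrow₂ j).trans (hrow₁ j)) hcol₂
  subst hS
  rw [pathConn_iff_reflTransGen]
  exact ((reflTransGen_moveStep_mono
      (Set.subset_union_right.trans Set.subset_union_left) hpath₁).trans
    (reflTransGen_moveStep_mono Set.subset_union_right hpath₂)).trans
    (reflTransGen_moveStep_mono (Set.subset_union_left.trans Set.subset_union_left) hpath₃)
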